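/- On the filtered tensor product F_Z the following hold for each 1 ≤ a ≤ n−1: (i) the operator x̃_a[i] := ∑_{s=0}^{i} (−1)^s x_a[i−s] σ_{a,s} is zero for every i ≥ N_a, where σ_{a,s} is the s-th elementary symmetric polynomial in the variables {z_p}_{p∈X_a}; (ii) setting x̃_a(z) = ∑_{i=0}^{N_a−1} x̃_a[i] z^{N_a−1−i}, for every p ∈ X_a one has x̃_a(z_p) = c_a^{(p)} x_a^{(p)}, where c_a^{(p)} = ∏_{p'∈X_a, p'≠p} (z_p − z_{p'}) ≠ 0. -/
import Mathlib


open MvPolynomial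

noncomputable section

/-- The ideal `J_k^{(m)}` of `ℂ[x_1,…,x_{n-1}]`: generated by `x_m,…,x_{n-1}` and all
monomials of degree `k+1` in `x_1,…,x_{m-1}`. -/
def Jmk (n m k : ℕ) : Ideal (MvPolynomial (Fin (n - 1)) ℂ) :=
  Ideal.span
    ({u | ∃ i : Fin (n - 1), m ≤ i.val + 1 ∧ u = X i} ∪
     {u | ∃ ν : Fin (n - 1) → ℕ, (∀ i : Fin (n - 1), m ≤ i.val + 1 → ν i = 0) ∧
        (∑ i, ν i) = k + 1 ∧ u = ∏ i, X i ^ ν i})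

/-- `V_k^{(m)}` -/
abbrev Vmk (n m k : ℕ) := MvPolynomial (Fin (n - 1)) ℂ ⧸ Jmk n m k

variable (n N : ℕ) (nn kk : Fin N → ℕ)

/-- The tensor product `F_Z = V_{k_1}^{(n_1)} ⊗ ⋯ ⊗ V_{k_N}^{(n_N)}`. -/
abbrev FZten := PiTensorProduct ℂ (fun p : Fin N => Vmk n (nn p) (kk p))

/-- `x_a^{(p)}`: multiplication by `x_a` on the `p`-th tensor factor. -/
def xfac (a : Fin (n - 1)) (p : Fin N) :
    Module.End ℂ (FZten n N nn kk) :=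
  PiTensorProduct.map (Function.update
    (fun q => (LinearMap.id : Vmk n (nn q) (kk q) →ₗ[ℂ] Vmk n (nn q) (kk q))) p
    (LinearMap.mulLeft ℂ (Ideal.Quotient.mk (Jmk n (nn p) (kk p)) (X a))))

variable (z : Fin N → ℂ)

/-- the operator `x_a[i] = ∑_p z_p^i x_a^{(p)}` -/
def xopF (a : Fin (n - 1)) (i : ℕ) : Module.End ℂ (FZten n N nn kk) :=
  ∑ p : Fin N, z p ^ i • xfac n N nn kk a p

/-- `X_a = {p : n_p > a}` -/
def Xset (a : Fin (n - 1)) : Finset (Fin N) :=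
  Finset.univ.filter (fun p => a.val + 1 < nn p)

/-- `N_a = |X_a|` -/
def NcF (a : Fin (n - 1)) : ℕ := (Xset n N nn a).card

/-- the `s`-th elementary symmetric polynomial of the `z_p`, `p ∈ X_a` -/
def esymZ (a : Fin (n - 1)) (s : ℕ) : ℂ :=
  ∑ S ∈ (Xset n N nn a).powersetCard s, ∏ p ∈ S, z p

/-- `x̃_a[i] = ∑_{s=0}^i (-1)^s x_a[i-s] σ_{a,s}` -/
def xtil (a : Fin (n - 1)) (i : ℕ) : Module.End ℂ (FZten n N nn kk) :=
  ∑ s ∈ Finset.range (i + 1),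
    ((-1 : ℂ) ^ s * esymZ n N nn z a s) • xopF n N nn kk z a (i - s)

/-- `x̃_a(w) = ∑_{i=0}^{N_a-1} x̃_a[i] w^{N_a-1-i}` -/
def xtilz (a : Fin (n - 1)) (w : ℂ) : Module.End ℂ (FZten n N nn kk) :=
  ∑ i ∈ Finset.range (NcF n N nn a),
    w ^ (NcF n N nn a - 1 - i) • xtil n N nn kk z a i

section ScalAux

open Finset Polynomial




variable {ι : Type*} [DecidableEq ι]

/-- elementary symmetric sum -/
def eeS (S : Finset ι) (z : ι → ℂ) (s : ℕ) : ℂ :=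
  ∑ T ∈ S.powersetCard s, ∏ p ∈ T, z p

lemma nodal_eq_sum (S : Finset ι) (z : ι → ℂ) :
    Lagrange.nodal S z =
      ∑ j ∈ Finset.range (S.card + 1),
        Polynomial.C ((-1) ^ j * eeS S z j) * Polynomial.X ^ (S.card - j) := by
  have h1 : Lagrange.nodal S z
      = ((S.val.map z).map fun t => Polynomial.X - Polynomial.C t).prod := by
    rw [Lagrange.nodal, Finset.prod_eq_multiset_prod, Multiset.map_map]
    rfl
  rw [h1, Multiset.prod_X_sub_X_eq_sum_esymm]
  simp only [Multiset.card_map, Finset.esymm_map_val]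
  refine Finset.sum_congr rfl fun j _ => ?_
  rw [eeS, map_mul, map_pow, map_neg, map_one, mul_assoc]
  rfl

lemma eval_nodal_sum (S : Finset ι) (z : ι → ℂ) (x : ℂ) :
    (∏ r ∈ S, (x - z r)) =
      ∑ j ∈ Finset.range (S.card + 1), (-1) ^ j * eeS S z j * x ^ (S.card - j) := by
  rw [← Lagrange.eval_nodal, nodal_eq_sum, Polynomial.eval_finset_sum]
  simp [Polynomial.eval_mul]

lemma E_zero (S : Finset ι) (z : ι → ℂ) {p : ι} (hp : p ∈ S) {i : ℕ}
    (hi : S.card ≤ i) :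
    ∑ s ∈ Finset.range (i + 1), (-1) ^ s * eeS S z s * z p ^ (i - s) = 0 := by
  have h0 : ∀ s, S.card < s → eeS S z s = 0 := by
    intro s hs
    rw [eeS, Finset.powersetCard_eq_empty.mpr hs, Finset.sum_empty]
  have hsub : ∑ s ∈ Finset.range (i + 1), (-1) ^ s * eeS S z s * z p ^ (i - s)
      = ∑ s ∈ Finset.range (S.card + 1), (-1) ^ s * eeS S z s * z p ^ (i - s) := by
    refine (Finset.sum_subset (Finset.range_subset_range.mpr (by omega)) ?_).symm
    intro s hs hns
    rw [Finset.mem_range] at hs hns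
    rw [h0 s (by omega), mul_zero, zero_mul]
  rw [hsub]
  have h2 : ∀ s ∈ Finset.range (S.card + 1),
      (-1) ^ s * eeS S z s * z p ^ (i - s)
        = z p ^ (i - S.card) * ((-1) ^ s * eeS S z s * z p ^ (S.card - s)) := by
    intro s hs
    rw [Finset.mem_range] at hs
    have h3 : i - s = (i - S.card) + (S.card - s) := by omega
    rw [h3, pow_add]; ring
  rw [Finset.sum_congr rfl h2, ← Finset.mul_sum, ← eval_nodal_sum,
    Finset.prod_eq_zero hp (sub_self (z p)), mul_zero]

/-- the swapped form of the double sum `D` -/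
lemma D_swap (S : Finset ι) (z : ι → ℂ) (x y : ℂ) :
    ∑ i ∈ Finset.range S.card, x ^ (S.card - 1 - i) *
        ∑ s ∈ Finset.range (i + 1), (-1) ^ s * eeS S z s * y ^ (i - s)
      = ∑ s ∈ Finset.range S.card, (-1) ^ s * eeS S z s *
          ∑ j ∈ Finset.range (S.card - s), y ^ j * x ^ (S.card - s - 1 - j) := by
  set c := S.card
  have h := Finset.sum_Ico_Ico_comm 0 c
    (fun s i => x ^ (c - 1 - i) * ((-1) ^ s * eeS S z s * y ^ (i - s)))
  simp only [← Finset.range_eq_Ico] at h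
  calc ∑ i ∈ Finset.range c, x ^ (c - 1 - i) *
          ∑ s ∈ Finset.range (i + 1), (-1) ^ s * eeS S z s * y ^ (i - s)
      = ∑ i ∈ Finset.range c, ∑ s ∈ Finset.range (i + 1),
          x ^ (c - 1 - i) * ((-1) ^ s * eeS S z s * y ^ (i - s)) := by
        simp_rw [Finset.mul_sum]
    _ = ∑ s ∈ Finset.range c, ∑ i ∈ Finset.Ico s c,
          x ^ (c - 1 - i) * ((-1) ^ s * eeS S z s * y ^ (i - s)) := by
        rw [← h]
    _ = _ := by
        refine Finset.sum_congr rfl fun s hs => ?_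
        rw [Finset.mem_range] at hs
        rw [Finset.sum_Ico_eq_sum_range, Finset.mul_sum]
        refine Finset.sum_congr rfl fun j hj => ?_
        rw [Finset.mem_range] at hj
        have h1 : c - 1 - (s + j) = c - s - 1 - j := by omega
        have h2 : s + j - s = j := by omega
        rw [h1, h2]; ring

lemma D_offdiag (S : Finset ι) (z : ι → ℂ) {p q : ι} (hp : p ∈ S) (hq : q ∈ S)
    (hne : z p ≠ z q) :
    ∑ i ∈ Finset.range S.card, z p ^ (S.card - 1 - i) *
        ∑ s ∈ Finset.range (i + 1), (-1) ^ s * eeS S z s * z q ^ (i - s) = 0 := by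
  rw [D_swap]
  set c := S.card with hc
  have key : (z q - z p) * (∑ s ∈ Finset.range c, (-1) ^ s * eeS S z s *
      ∑ j ∈ Finset.range (c - s), z q ^ j * z p ^ (c - s - 1 - j)) = 0 := by
    rw [Finset.mul_sum]
    have h1 : ∀ s ∈ Finset.range c,
        (z q - z p) * ((-1) ^ s * eeS S z s *
            ∑ j ∈ Finset.range (c - s), z q ^ j * z p ^ (c - s - 1 - j))
          = ((-1) ^ s * eeS S z s * z q ^ (c - s))
            - ((-1) ^ s * eeS S z s * z p ^ (c - s)) := by
      intro s _
      have hg := geom_sum₂_mul (z q) (z p) (c - s)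
      calc (z q - z p) * ((-1) ^ s * eeS S z s *
              ∑ j ∈ Finset.range (c - s), z q ^ j * z p ^ (c - s - 1 - j))
          = (-1) ^ s * eeS S z s *
              ((∑ j ∈ Finset.range (c - s), z q ^ j * z p ^ (c - s - 1 - j)) * (z q - z p)) := by
            ring
        _ = (-1) ^ s * eeS S z s * (z q ^ (c - s) - z p ^ (c - s)) := by rw [hg]
        _ = _ := by ring
    rw [Finset.sum_congr rfl h1, Finset.sum_sub_distrib]
    have h2 : ∑ s ∈ Finset.range c, (-1) ^ s * eeS S z s * z q ^ (c - s)
        = (∑ s ∈ Finset.range (c + 1), (-1) ^ s * eeS S z s * z q ^ (c - s))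
          - (-1) ^ c * eeS S z c * z q ^ (c - c) := by
      rw [Finset.sum_range_succ]; ring
    have h3 : ∑ s ∈ Finset.range c, (-1) ^ s * eeS S z s * z p ^ (c - s)
        = (∑ s ∈ Finset.range (c + 1), (-1) ^ s * eeS S z s * z p ^ (c - s))
          - (-1) ^ c * eeS S z c * z p ^ (c - c) := by
      rw [Finset.sum_range_succ]; ring
    rw [h2, h3, ← eval_nodal_sum, ← eval_nodal_sum,
      Finset.prod_eq_zero hq (sub_self (z q)), Finset.prod_eq_zero hp (sub_self (z p))]
    simp
  rcases mul_eq_zero.mp key with h | h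
  · exact absurd (sub_eq_zero.mp h).symm hne
  · exact h

lemma D_diag (S : Finset ι) (z : ι → ℂ) {p : ι} (hp : p ∈ S) :
    ∑ i ∈ Finset.range S.card, z p ^ (S.card - 1 - i) *
        ∑ s ∈ Finset.range (i + 1), (-1) ^ s * eeS S z s * z p ^ (i - s)
      = ∏ r ∈ S.erase p, (z p - z r) := by
  rw [D_swap]
  set c := S.card with hc
  set x := z p with hx
  have h1 : ∀ s ∈ Finset.range c,
      (-1) ^ s * eeS S z s * ∑ j ∈ Finset.range (c - s), x ^ j * x ^ (c - s - 1 - j)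
        = (-1) ^ s * eeS S z s * (((c - s : ℕ) : ℂ) * x ^ (c - s - 1)) := by
    intro s hs
    rw [Finset.mem_range] at hs
    congr 1
    have h2 : ∀ j ∈ Finset.range (c - s), x ^ j * x ^ (c - s - 1 - j) = x ^ (c - s - 1) := by
      intro j hj
      rw [Finset.mem_range] at hj
      rw [← pow_add]
      congr 1
      omega
    rw [Finset.sum_congr rfl h2, Finset.sum_const, Finset.card_range, nsmul_eq_mul]
  rw [Finset.sum_congr rfl h1]
  have hder : Polynomial.eval x (Polynomial.derivative (Lagrange.nodal S z))
      = ∑ s ∈ Finset.range c, (-1) ^ s * eeS S z s * (((c - s : ℕ) : ℂ) * x ^ (c - s - 1)) := by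
    rw [nodal_eq_sum]
    rw [Polynomial.derivative_sum]
    simp_rw [Polynomial.derivative_C_mul_X_pow]
    rw [Polynomial.eval_finset_sum]
    simp only [Polynomial.eval_mul, Polynomial.eval_C, Polynomial.eval_pow, Polynomial.eval_X]
    rw [Finset.sum_range_succ]
    simp only [Nat.sub_self, Nat.cast_zero, mul_zero, zero_mul, add_zero]
    refine Finset.sum_congr rfl fun s hs => ?_
    ring
  rw [← hder, Lagrange.eval_nodal_derivative_eval_node_eq hp, Lagrange.eval_nodal]

end ScalAux


section OpAux

variable (n N : ℕ) (nn kk : Fin N → ℕ) (z : Fin N → ℂ)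

lemma esymZ_eq_eeS (a : Fin (n - 1)) (s : ℕ) :
    esymZ n N nn z a s = eeS (Xset n N nn a) z s := rfl

lemma xfac_zero (a : Fin (n - 1)) (p : Fin N) (h : p ∉ Xset n N nn a) :
    xfac n N nn kk a p = 0 := by
  have hm : nn p ≤ a.val + 1 := by
    by_contra hc
    exact h (Finset.mem_filter.mpr ⟨Finset.mem_univ _, by omega⟩)
  have hX : (Ideal.Quotient.mk (Jmk n (nn p) (kk p)) (MvPolynomial.X a)) = 0 := by
    rw [Ideal.Quotient.eq_zero_iff_mem]
    exact Ideal.subset_span (Or.inl ⟨a, hm, rfl⟩)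
  rw [xfac, hX, LinearMap.mulLeft_zero_eq_zero]
  refine PiTensorProduct.ext (MultilinearMap.ext fun v => ?_)
  simp only [LinearMap.compMultilinearMap_apply, PiTensorProduct.map_tprod,
    LinearMap.zero_apply, LinearMap.zero_compMultilinearMap]
  have hv : (fun q => (Function.update
      (fun q => (LinearMap.id : Vmk n (nn q) (kk q) →ₗ[ℂ] Vmk n (nn q) (kk q))) p 0 q) (v q))
      = Function.update v p 0 := by
    funext q
    by_cases hq : q = p
    · subst hq; simp
    · simp [Function.update_of_ne hq]
  rw [hv]
  exact MultilinearMap.map_update_zero _ _ _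

lemma xopF_eq (a : Fin (n - 1)) (i : ℕ) :
    xopF n N nn kk z a i = ∑ p ∈ Xset n N nn a, z p ^ i • xfac n N nn kk a p := by
  rw [xopF]
  exact (Finset.sum_subset (Finset.subset_univ _)
    (fun p _ hp => by rw [xfac_zero n N nn kk a p hp, smul_zero])).symm

lemma xtil_eq (a : Fin (n - 1)) (i : ℕ) :
    xtil n N nn kk z a i = ∑ p ∈ Xset n N nn a,
      (∑ s ∈ Finset.range (i + 1),
        (-1 : ℂ) ^ s * eeS (Xset n N nn a) z s * z p ^ (i - s)) • xfac n N nn kk a p := by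
  rw [xtil]
  simp_rw [xopF_eq, Finset.smul_sum, smul_smul, esymZ_eq_eeS]
  rw [Finset.sum_comm]
  simp_rw [← Finset.sum_smul]

end OpAux

/-- Lemma 2.1: on the filtered tensor product `F_Z` with distinct
parameters `z_p`: (i) `x̃_a[i] = 0` for `i ≥ N_a`; (ii) for `p ∈ X_a`,
`x̃_a(z_p) = c_a^{(p)} x_a^{(p)}` with `c_a^{(p)} = ∏_{p' ∈ X_a, p' ≠ p} (z_p - z_{p'}) ≠ 0`. -/
theorem stmt2 (n N : ℕ) (hn : 2 ≤ n) (hN : 1 ≤ N) (nn kk : Fin N → ℕ)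
    (hnn : ∀ p, 1 ≤ nn p ∧ nn p ≤ n)
    (z : Fin N → ℂ) (hz : ∀ p q : Fin N, p ≠ q → z p ≠ z q) :
    (∀ (a : Fin (n - 1)) (i : ℕ), NcF n N nn a ≤ i →
      xtil n N nn kk z a i = 0) ∧
    (∀ (a : Fin (n - 1)) (p : Fin N), p ∈ Xset n N nn a →
      (∏ p' ∈ (Xset n N nn a).erase p, (z p - z p')) ≠ 0 ∧
      xtilz n N nn kk z a (z p) =
        (∏ p' ∈ (Xset n N nn a).erase p, (z p - z p')) • xfac n N nn kk a p) := by
  constructor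
  · intro a i hi
    rw [xtil_eq]
    refine Finset.sum_eq_zero fun p hp => ?_
    rw [E_zero (Xset n N nn a) z hp hi, zero_smul]
  · intro a p hp
    have hcp : (∏ p' ∈ (Xset n N nn a).erase p, (z p - z p')) ≠ 0 := by
      refine Finset.prod_ne_zero_iff.mpr fun q hq => ?_
      exact sub_ne_zero.mpr (hz p q (Finset.ne_of_mem_erase hq).symm)
    refine ⟨hcp, ?_⟩
    rw [xtilz]
    simp only [NcF] at *
    simp_rw [xtil_eq, Finset.smul_sum, smul_smul]
    rw [Finset.sum_comm]
    simp_rw [← Finset.sum_smul]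
    rw [Finset.sum_eq_single_of_mem p hp]
    · congr 1
      exact D_diag (Xset n N nn a) z hp
    · intro q hq hqp
      rw [D_offdiag (Xset n N nn a) z hp hq (hz p q hqp.symm), zero_smul]

end
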